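/- Let A be a real symmetric positive definite n×n matrix and d ≥ 0. A positive definite matrix X satisfies ρ(A,X) ≤ d (where ρ is the Bures-Wasserstein distance) if and only if there exists a real n×n matrix K with [[X, Kᵀ],[K, I]] ⪰ 0 and Tr(A) + Tr(X) − 2Tr(√A·K) ≤ d². -/

import Mathlib

open Matrix BigOperators

open Classical in
noncomputable def msqrt {n : ℕ} (M : Matrix (Fin n) (Fin n) ℝ) : Matrix (Fin n) (Fin n) ℝ :=
  if h : M.PosSemidef then
    (h.1.eigenvectorUnitary : Matrix (Fin n) (Fin n) ℝ) * diagonal ((↑) ∘ (√·) ∘ h.1.eigenvalues) *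
      (star h.1.eigenvectorUnitary : Matrix (Fin n) (Fin n) ℝ) else 0

noncomputable def fnorm {n : ℕ} (A : Matrix (Fin n) (Fin n) ℝ) : ℝ :=
  Real.sqrt (∑ i, ∑ j, (A i j) ^ 2)

/-!
The Schur complement turns the block condition into `Kᵀ K ≤ X`. Under this constraint
`tr (√A K) ≤ tr √B` with `B = √A X √A`: for `M = K √A` we have `Mᵀ M ≤ B`, and with
`R = B^(1/4)`, `Y = M R⁻¹`, AM-GM for the trace inner product gives
`2 tr M = 2 tr (Rᵀ Y) ≤ tr (Rᵀ R) + tr (Yᵀ Y) ≤ 2 tr √B`, since `Yᵀ Y ≤ R⁻¹ B R⁻¹ = R²`.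
The bound is attained at `K = √B (√A)⁻¹`, for which `Kᵀ K = X`.
-/

section RealMatrices

variable {m ι : Type*} [Fintype m] [Fintype ι]

theorem two_mul_trace_transpose_mul_le (R Y : Matrix ι m ℝ) :
    2 * (Rᵀ * Y).trace ≤ (Rᵀ * R).trace + (Yᵀ * Y).trace := by
  have hsq : 0 ≤ ((R - Y)ᵀ * (R - Y)).trace := by
    simpa using (posSemidef_conjTranspose_mul_self (R - Y)).trace_nonneg
  have hcomm : (Yᵀ * R).trace = (Rᵀ * Y).trace := by
    rw [← trace_transpose, transpose_mul, transpose_transpose]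
  simp only [transpose_sub, Matrix.sub_mul, Matrix.mul_sub, trace_sub, hcomm] at hsq
  linarith

theorem trace_le_trace_of_posSemidef_sub {B C : Matrix m m ℝ} (h : (B - C).PosSemidef) :
    C.trace ≤ B.trace := by
  have := h.trace_nonneg
  rw [trace_sub] at this
  linarith

theorem fromBlocks_one_posSemidef_iff [DecidableEq ι] (X : Matrix m m ℝ) (K : Matrix ι m ℝ) :
    (fromBlocks X Kᵀ K 1).PosSemidef ↔ (X - Kᵀ * K).PosSemidef := by
  let _ : Invertible (1 : Matrix ι ι ℝ) := invertibleOne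
  simpa using PosDef.fromBlocks₂₂ X Kᵀ PosDef.one

end RealMatrices

section MatrixSqrt

open scoped MatrixOrder

variable {n : ℕ} {M : Matrix (Fin n) (Fin n) ℝ}

theorem msqrt_eq_sqrt (h : M.PosSemidef) : msqrt M = CFC.sqrt M := by
  rw [CFC.sqrt_eq_real_sqrt _ h.nonneg, cfcₙ_eq_cfc, h.1.cfc_eq, msqrt, dif_pos h]
  rfl

theorem msqrt_mul_msqrt (h : M.PosSemidef) : msqrt M * msqrt M = M := by
  rw [msqrt_eq_sqrt h, CFC.sqrt_mul_sqrt_self M h.nonneg]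

theorem posSemidef_msqrt (h : M.PosSemidef) : (msqrt M).PosSemidef := by
  rw [msqrt_eq_sqrt h]
  exact (CFC.sqrt_nonneg M).posSemidef

theorem posDef_msqrt (h : M.PosDef) : (msqrt M).PosDef := by
  rw [msqrt_eq_sqrt h.posSemidef]
  exact h.isStrictlyPositive.sqrt.posDef

theorem transpose_msqrt (h : M.PosSemidef) : (msqrt M)ᵀ = msqrt M :=
  isHermitian_iff_isSymm.mp (posSemidef_msqrt h).isHermitian

end MatrixSqrt

section BuresWasserstein

variable {n : ℕ}

theorem trace_le_trace_msqrt {B M : Matrix (Fin n) (Fin n) ℝ} (hB : B.PosDef)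
    (hM : (B - Mᵀ * M).PosSemidef) : M.trace ≤ (msqrt B).trace := by
  set S := msqrt B
  set R := msqrt S
  have hS : S.PosDef := posDef_msqrt hB
  have hRR : R * R = S := msqrt_mul_msqrt hS.posSemidef
  have hRt : Rᵀ = R := transpose_msqrt hS.posSemidef
  have hRu : IsUnit R.det := (isUnit_iff_isUnit_det R).mp (posDef_msqrt hS).isUnit
  set Y := M * R⁻¹
  have htrace : M.trace = (Rᵀ * Y).trace := by
    rw [hRt, trace_mul_comm, mul_assoc, nonsing_inv_mul _ hRu, mul_one]
  have hconj : R⁻¹ * (B - Mᵀ * M) * (R⁻¹)ᵀ = S - Yᵀ * Y := by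
    have hBR : B = R * R * (R * R) := by rw [hRR, msqrt_mul_msqrt hB.posSemidef]
    simp only [Y, transpose_mul, transpose_nonsing_inv, hRt, hBR, ← hRR, Matrix.mul_sub,
      Matrix.sub_mul, Matrix.mul_assoc, mul_nonsing_inv _ hRu, nonsing_inv_mul_cancel_left _ _ hRu,
      Matrix.mul_one]
  have hY : (Yᵀ * Y).trace ≤ S.trace := by
    refine trace_le_trace_of_posSemidef_sub ?_
    rw [← hconj]
    simpa using hM.mul_mul_conjTranspose_same R⁻¹
  have hR : (Rᵀ * R).trace = S.trace := by rw [hRt, hRR]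
  linarith [two_mul_trace_transpose_mul_le R Y]

theorem posDef_msqrt_mul_mul_msqrt {A X : Matrix (Fin n) (Fin n) ℝ} (hA : A.PosDef)
    (hX : X.PosDef) : (msqrt A * X * msqrt A).PosDef := by
  have h := hX.conjTranspose_mul_mul_same
    (mulVec_injective_iff_isUnit.mpr (posDef_msqrt hA).isUnit)
  rwa [conjTranspose_eq_transpose_of_trivial, transpose_msqrt hA.posSemidef] at h

theorem exists_transpose_mul_self_eq_and_trace_msqrt_mul_eq {A X : Matrix (Fin n) (Fin n) ℝ}
    (hA : A.PosDef) (hX : X.PosDef) :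
    ∃ K : Matrix (Fin n) (Fin n) ℝ, Kᵀ * K = X ∧
      (msqrt A * K).trace = (msqrt (msqrt A * X * msqrt A)).trace := by
  have hB := (posDef_msqrt_mul_mul_msqrt hA hX).posSemidef
  have hT := transpose_msqrt hA.posSemidef
  have hS := transpose_msqrt hB
  have hSS := msqrt_mul_msqrt hB
  have hTu : IsUnit (msqrt A).det := (isUnit_iff_isUnit_det _).mp (posDef_msqrt hA).isUnit
  refine ⟨msqrt (msqrt A * X * msqrt A) * (msqrt A)⁻¹, ?_, ?_⟩
  · rw [transpose_mul, transpose_nonsing_inv, hT, hS, Matrix.mul_assoc,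
      ← Matrix.mul_assoc _ _ (msqrt A)⁻¹, hSS]
    simp only [Matrix.mul_assoc, mul_nonsing_inv _ hTu, nonsing_inv_mul_cancel_left _ _ hTu,
      Matrix.mul_one]
  · rw [trace_mul_comm, Matrix.mul_assoc, nonsing_inv_mul _ hTu, Matrix.mul_one]

theorem trace_msqrt_mul_le_of_posSemidef_sub {A X K : Matrix (Fin n) (Fin n) ℝ}
    (hA : A.PosDef) (hX : X.PosDef) (hK : (X - Kᵀ * K).PosSemidef) :
    (msqrt A * K).trace ≤ (msqrt (msqrt A * X * msqrt A)).trace := by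
  have hT := transpose_msqrt hA.posSemidef
  have hKT : (K * msqrt A)ᵀ * (K * msqrt A) = msqrt A * (Kᵀ * K) * msqrt A := by
    rw [transpose_mul, hT]
    simp only [Matrix.mul_assoc]
  rw [trace_mul_comm]
  refine trace_le_trace_msqrt (posDef_msqrt_mul_mul_msqrt hA hX) ?_
  have h := hK.mul_mul_conjTranspose_same (msqrt A)
  rwa [conjTranspose_eq_transpose_of_trivial, hT, Matrix.mul_sub, Matrix.sub_mul, ← hKT] at h

end BuresWasserstein

theorem stmt_15 {n : ℕ} (A : Matrix (Fin n) (Fin n) ℝ) (hA : A.PosDef)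
    (d : ℝ) (hd : 0 ≤ d) (X : Matrix (Fin n) (Fin n) ℝ) (hX : X.PosDef) :
    Real.sqrt (A.trace + X.trace - 2 * (msqrt (msqrt A * X * msqrt A)).trace) ≤ d ↔
    ∃ K : Matrix (Fin n) (Fin n) ℝ, (Matrix.fromBlocks X Kᵀ K 1).PosSemidef ∧
      A.trace + X.trace - 2 * (msqrt A * K).trace ≤ d ^ 2 := by
  simp only [Real.sqrt_le_left hd, fromBlocks_one_posSemidef_iff]
  constructor
  · intro h
    obtain ⟨K, hKK, htrace⟩ := exists_transpose_mul_self_eq_and_trace_msqrt_mul_eq hA hX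
    refine ⟨K, ?_, htrace ▸ h⟩
    rw [hKK, sub_self]
    exact PosSemidef.zero
  · rintro ⟨K, hK, h⟩
    linarith [trace_msqrt_mul_le_of_posSemidef_sub hA hX hK]
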